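/- Let v ∈ V and suppose in addition that v_{i,j} ∈ t^{ν*_i − ν*_j}𝒪 for every case-(B) pair (i,j). Set u = x⁻¹ v x. Then u_{i,j} ∈ t^{λ_i − λ_j}𝒪 for every pair (i,j) of case (C) and for every pair (i,j) of case (D), and u_{p,j} ∈ t^{λ_p − λ_j − N}𝒪 for every pair (p,j) of case (E). -/

import Mathlib

open Matrix

noncomputable section

/-- The ring `𝒪 = ℂ[[t]]` of formal power series. -/
abbrev OO : Type := PowerSeries ℂ

/-- The field `K = ℂ((t))` of formal Laurent series. -/
abbrev KK : Type := LaurentSeries ℂ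

/-- `t^k ∈ K` for an integer `k`. -/
def tz (k : ℤ) : KK := HahnSeries.single k 1

/-- The inclusion `𝒪 → K`. -/
def coeO : OO →+* KK := HahnSeries.ofPowerSeries ℤ ℂ

/-- `f` belongs to the `𝒪`-lattice `t^k 𝒪 ⊆ K`. -/
def memT (k : ℤ) (f : KK) : Prop := ∃ w : OO, f = tz k * coeO w

/-- The `GL`-coordinates of the coroot `β∨ = e_p − e_{q+1}` (indices `0`-based). -/
def bcov (p q : ℕ) (i : ℕ) : ℤ := (if i = p then 1 else 0) - (if i = q + 1 then 1 else 0)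

/-- The matrix `x = I + Σ_{j=p+1}^{q+1} t^{λ_p − λ_j − N} E_{p,j}` (indices `0`-based). -/
def xMat (n N p q : ℕ) (lam : ℕ → ℤ) : Matrix (Fin (n+1)) (Fin (n+1)) KK :=
  Matrix.of fun i j =>
    if i = j then 1
    else if (i : ℕ) = p ∧ p < (j : ℕ) ∧ (j : ℕ) ≤ q + 1 then tz (lam p - lam j - N)
    else 0

/-- Case (B): `i ≠ p` and (`j ≤ p` or `j > q+1`). -/
def caseB (p q i j : ℕ) : Prop := i ≠ p ∧ (j ≤ p ∨ q + 1 < j)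

/-- Case (C): `i = p` and `j > q+1`. -/
def caseC (p q i j : ℕ) : Prop := i = p ∧ q + 1 < j

/-- Case (D): `p < j ≤ q+1` and `i ≠ p`. -/
def caseD (p q i j : ℕ) : Prop := p < j ∧ j ≤ q + 1 ∧ i ≠ p

/-- Case (E): `i = p` and `p < j ≤ q+1`. -/
def caseE (p q i j : ℕ) : Prop := i = p ∧ p < j ∧ j ≤ q + 1

/-! Write `x = 1 + E` with `E = e_p ⊗ c`, where `c_j = t^{λ_p−λ_j−N}` for `p < j ≤ q+1` and `c_j = 0`
otherwise. Since `c_p = 0`, `E² = 0`, so `x⁻¹ = 1 − E` and `u = (1 − E) w` with `w = v x`, whose entries are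
`w_{ij} = v_{ij} + v_{ip} c_j`. Hence `u_{ij} = w_{ij}` off row `p`, and `u_{pj} = w_{pj} − Σ_{p<a≤q+1} c_a w_{aj}`.
Below row `p` the gap `λ_a ≤ λ_{p+1} ≤ λ_p − N` absorbs the factor `c_j`; above row `p`, and in the sum of
case (C), the stronger case-(B) bound coming from `ν* = λ + μ − Nβ∨` supplies the missing powers of `t`,
through the dominance of `μ` and `μ_q − μ_{q+1} ≥ N`. -/

lemma tz_mul_tz (a b : ℤ) : tz a * tz b = tz (a + b) := by
  simp [tz, HahnSeries.single_mul_single]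

lemma coeO_X_pow (m : ℕ) : coeO (PowerSeries.X ^ m) = tz m := by
  rw [map_pow, coeO, HahnSeries.ofPowerSeries_X, tz, HahnSeries.single_pow, one_pow, nsmul_one]

section Lattice

variable {k l : ℤ} {f g : KK}

lemma memT_zero (k : ℤ) : memT k 0 := ⟨0, by simp⟩

lemma memT_tz (k : ℤ) : memT k (tz k) := ⟨1, by simp⟩

lemma memT_add (hf : memT k f) (hg : memT k g) : memT k (f + g) := by
  obtain ⟨w, rfl⟩ := hf
  obtain ⟨w', rfl⟩ := hg
  exact ⟨w + w', by rw [map_add, mul_add]⟩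

lemma memT_sub (hf : memT k f) (hg : memT k g) : memT k (f - g) := by
  obtain ⟨w, rfl⟩ := hf
  obtain ⟨w', rfl⟩ := hg
  exact ⟨w - w', by rw [map_sub, mul_sub]⟩

lemma memT_mul (hf : memT k f) (hg : memT l g) : memT (k + l) (f * g) := by
  obtain ⟨w, rfl⟩ := hf
  obtain ⟨w', rfl⟩ := hg
  exact ⟨w * w', by rw [map_mul, ← tz_mul_tz]; ring⟩

lemma memT_mono (h : l ≤ k) (hf : memT k f) : memT l f := by
  obtain ⟨w, rfl⟩ := hf
  refine ⟨PowerSeries.X ^ (k - l).toNat * w, ?_⟩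
  rw [map_mul, coeO_X_pow, ← mul_assoc, tz_mul_tz, Int.toNat_of_nonneg (sub_nonneg.2 h),
    add_sub_cancel]

lemma memT_sum {ι : Type*} {s : Finset ι} {f : ι → KK} (h : ∀ a ∈ s, memT k (f a)) :
    memT k (∑ a ∈ s, f a) := by
  classical
  induction s using Finset.induction_on with
  | empty => exact memT_zero k
  | insert a s ha ih =>
    rw [Finset.sum_insert ha]
    exact memT_add (h a (s.mem_insert_self a)) (ih fun b hb => h b (Finset.mem_insert_of_mem hb))

end Lattice

section Transvection

variable {m R : Type*} [Fintype m] [DecidableEq m]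

lemma inv_one_add_of_mul_self_eq_zero [CommRing R] {E : Matrix m m R} (hE : E * E = 0) :
    (1 + E)⁻¹ = 1 - E :=
  inv_eq_right_inv (by rw [add_mul, mul_sub, mul_sub, hE]; simp)

lemma vecMulVec_single_mul_self [Ring R] {r : m} {c : m → R} (hc : c r = 0) :
    vecMulVec (Pi.single r 1) c * vecMulVec (Pi.single r 1) c = 0 := by
  rw [vecMulVec_mul_vecMulVec, dotProduct_single_one, hc, zero_smul, vecMulVec_zero]

lemma mul_one_add_vecMulVec_single_apply [Ring R] (v : Matrix m m R) (r : m) (c : m → R) (i j : m) :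
    (v * (1 + vecMulVec (Pi.single r 1) c)) i j = v i j + v i r * c j := by
  simp [mul_add, mul_vecMulVec, vecMulVec_apply]

lemma one_sub_vecMulVec_single_mul_apply [Ring R] (w : Matrix m m R) (r : m) (c : m → R) (i j : m) :
    ((1 - vecMulVec (Pi.single r 1) c) * w) i j = w i j - if i = r then ∑ a, c a * w a j else 0 := by
  by_cases h : i = r <;> simp [sub_mul, vecMulVec_mul, vecMulVec_apply, h, vecMul, dotProduct]

end Transvection

section Conjugation

variable {n N p q : ℕ} {lam : ℕ → ℤ}

/-- Row `p` of `x - 1`. -/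
def xRow (n N p q : ℕ) (lam : ℕ → ℤ) (j : Fin (n + 1)) : KK :=
  if p < (j : ℕ) ∧ (j : ℕ) ≤ q + 1 then tz (lam p - lam j - N) else 0

lemma memT_xRow (j : Fin (n + 1)) : memT (lam p - lam j - N) (xRow n N p q lam j) := by
  unfold xRow
  split_ifs
  exacts [memT_tz _, memT_zero _]

lemma xRow_eq_zero {j : Fin (n + 1)} (hj : ¬(p < (j : ℕ) ∧ (j : ℕ) ≤ q + 1)) :
    xRow n N p q lam j = 0 :=
  if_neg hj

lemma xMat_eq_one_add_vecMulVec (hp : p < n + 1) :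
    xMat n N p q lam = 1 + vecMulVec (Pi.single ⟨p, hp⟩ 1) (xRow n N p q lam) := by
  refine Matrix.ext fun i j => ?_
  simp only [xMat, xRow, of_apply, Matrix.add_apply, one_apply, vecMulVec_apply, Pi.single_apply,
    Fin.ext_iff]
  split_ifs <;> first | omega | simp

lemma conj_xMat_apply (hp : p < n + 1) (v : Matrix (Fin (n + 1)) (Fin (n + 1)) KK)
    (i j : Fin (n + 1)) :
    ((xMat n N p q lam)⁻¹ * v * xMat n N p q lam) i j =
      (v * xMat n N p q lam) i j -
        if (i : ℕ) = p then ∑ a, xRow n N p q lam a * (v * xMat n N p q lam) a j else 0 := by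
  have hsq := vecMulVec_single_mul_self (c := xRow n N p q lam) (r := ⟨p, hp⟩)
    (by simp [xRow])
  rw [Matrix.mul_assoc, xMat_eq_one_add_vecMulVec hp, inv_one_add_of_mul_self_eq_zero hsq,
    one_sub_vecMulVec_single_mul_apply]
  simp [Fin.ext_iff]

end Conjugation

section Bounds

variable {n N p q : ℕ} {lam mu nus : ℕ → ℤ} {v : Matrix (Fin (n + 1)) (Fin (n + 1)) KK}

lemma mul_xMat_apply (hp : p < n + 1) (i j : Fin (n + 1)) :
    (v * xMat n N p q lam) i j = v i j + v i ⟨p, hp⟩ * xRow n N p q lam j := by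
  rw [xMat_eq_one_add_vecMulVec hp, mul_one_add_vecMulVec_single_apply]

lemma memT_conj_xMat_apply_of_eq {k : ℤ} (hp : p < n + 1) {i j : Fin (n + 1)} (hi : (i : ℕ) = p)
    (hrow : memT k ((v * xMat n N p q lam) i j))
    (hsum : ∀ a : Fin (n + 1), p < (a : ℕ) → (a : ℕ) ≤ q + 1 →
      memT k (tz (lam p - lam a - N) * (v * xMat n N p q lam) a j)) :
    memT k (((xMat n N p q lam)⁻¹ * v * xMat n N p q lam) i j) := by
  rw [conj_xMat_apply hp, if_pos hi]
  refine memT_sub hrow (memT_sum fun a _ => ?_)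
  by_cases ha : p < (a : ℕ) ∧ (a : ℕ) ≤ q + 1
  · simpa only [xRow, if_pos ha] using hsum a ha.1 ha.2
  · simpa only [xRow_eq_zero ha, zero_mul] using memT_zero k

lemma memT_mul_xMat_apply_of_lt (hp : p < n + 1)
    (hlam : ∀ i j : ℕ, i ≤ j → j ≤ n → lam j ≤ lam i) (h2a : (N : ℤ) ≤ lam p - lam (p + 1))
    (hvO : ∀ i j : Fin (n + 1), memT 0 (v i j))
    (hvlam : ∀ i j : Fin (n + 1), i < j → memT (lam i - lam j) (v i j))
    {a : Fin (n + 1)} (ha : p < (a : ℕ)) (j : Fin (n + 1)) :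
    memT (lam a - lam j) ((v * xMat n N p q lam) a j) := by
  rw [mul_xMat_apply hp]
  have hap : lam a ≤ lam (p + 1) := hlam _ _ ha (by omega)
  refine memT_add ?_ (memT_mono ?_ (memT_mul (hvO a ⟨p, hp⟩) (memT_xRow j)))
  · rcases lt_or_ge a j with haj | hja
    · exact hvlam a j haj
    · exact memT_mono (sub_nonpos.2 (hlam _ _ hja (by omega))) (hvO a j)
  · linarith

lemma memT_mul_xMat_apply_of_lt_of_lt (hp : p < n + 1) (hpq : p ≤ q)
    (hmu : ∀ i j : ℕ, i ≤ j → j ≤ n → mu j ≤ mu i)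
    (hnus : ∀ i, nus i = lam i + mu i - N * bcov p q i)
    (hvlam : ∀ i j : Fin (n + 1), i < j → memT (lam i - lam j) (v i j))
    (hvB : ∀ i j : Fin (n + 1), i < j → caseB p q i j → memT (nus i - nus j) (v i j))
    {i j : Fin (n + 1)} (hip : (i : ℕ) < p) (hij : i < j) :
    memT (lam i - lam j) ((v * xMat n N p q lam) i j) := by
  rw [mul_xMat_apply hp]
  have hB : caseB p q i p := ⟨hip.ne, Or.inl le_rfl⟩
  refine memT_add (hvlam i j hij) (memT_mono ?_ (memT_mul (hvB i ⟨p, hp⟩ hip hB) (memT_xRow j)))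
  have hmu_ip : mu p ≤ mu i := hmu _ _ hip.le (by omega)
  simp only [hnus, bcov]
  split_ifs <;> omega

lemma memT_conj_xMat_apply_of_ne (hp : p < n + 1) (hpq : p ≤ q)
    (hlam : ∀ i j : ℕ, i ≤ j → j ≤ n → lam j ≤ lam i)
    (hmu : ∀ i j : ℕ, i ≤ j → j ≤ n → mu j ≤ mu i)
    (hnus : ∀ i, nus i = lam i + mu i - N * bcov p q i) (h2a : (N : ℤ) ≤ lam p - lam (p + 1))
    (hvO : ∀ i j : Fin (n + 1), memT 0 (v i j))
    (hvlam : ∀ i j : Fin (n + 1), i < j → memT (lam i - lam j) (v i j))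
    (hvB : ∀ i j : Fin (n + 1), i < j → caseB p q i j → memT (nus i - nus j) (v i j))
    {i j : Fin (n + 1)} (hi : (i : ℕ) ≠ p) (hij : i < j) :
    memT (lam i - lam j) (((xMat n N p q lam)⁻¹ * v * xMat n N p q lam) i j) := by
  rw [conj_xMat_apply hp, if_neg hi, sub_zero]
  rcases hi.lt_or_gt with hip | hpi
  · exact memT_mul_xMat_apply_of_lt_of_lt hp hpq hmu hnus hvlam hvB hip hij
  · exact memT_mul_xMat_apply_of_lt hp hlam h2a hvO hvlam hpi j

lemma memT_conj_xMat_apply_caseC (hp : p < n + 1) (hpq : p ≤ q)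
    (hmu : ∀ i j : ℕ, i ≤ j → j ≤ n → mu j ≤ mu i)
    (hnus : ∀ i, nus i = lam i + mu i - N * bcov p q i) (h2d : (N : ℤ) ≤ mu q - mu (q + 1))
    (hvlam : ∀ i j : Fin (n + 1), i < j → memT (lam i - lam j) (v i j))
    (hvB : ∀ i j : Fin (n + 1), i < j → caseB p q i j → memT (nus i - nus j) (v i j))
    {i j : Fin (n + 1)} (hij : i < j) (hC : caseC p q i j) :
    memT (lam i - lam j) (((xMat n N p q lam)⁻¹ * v * xMat n N p q lam) i j) := by
  obtain ⟨hi, hj⟩ := hC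
  have hxj : xRow n N p q lam j = 0 := xRow_eq_zero (by omega)
  refine memT_conj_xMat_apply_of_eq hp hi ?_ fun a hpa haq => ?_
  · simpa only [mul_xMat_apply hp, hxj, mul_zero, add_zero] using hvlam i j hij
  · rw [mul_xMat_apply hp, hxj, mul_zero, add_zero]
    have hB : caseB p q a j := ⟨hpa.ne', Or.inr hj⟩
    refine memT_mono ?_ (memT_mul (memT_tz _) (hvB a j (by omega) hB))
    have hmu_j : mu j ≤ mu (q + 1) := hmu _ _ hj.le (by omega)
    simp only [hnus, bcov, hi]
    rcases (show (a : ℕ) = q + 1 ∨ (a : ℕ) ≤ q by omega) with ha | ha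
    · rw [ha]
      split_ifs <;> omega
    · have hmu_a : mu q ≤ mu a := hmu _ _ ha (by omega)
      split_ifs <;> omega

lemma memT_conj_xMat_apply_caseE (hp : p < n + 1)
    (hlam : ∀ i j : ℕ, i ≤ j → j ≤ n → lam j ≤ lam i) (h2a : (N : ℤ) ≤ lam p - lam (p + 1))
    (hvO : ∀ i j : Fin (n + 1), memT 0 (v i j))
    (hvlam : ∀ i j : Fin (n + 1), i < j → memT (lam i - lam j) (v i j))
    {i j : Fin (n + 1)} (hij : i < j) (hE : caseE p q i j) :
    memT (lam i - lam j - N) (((xMat n N p q lam)⁻¹ * v * xMat n N p q lam) i j) := by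
  obtain ⟨hi, -, -⟩ := hE
  refine memT_conj_xMat_apply_of_eq hp hi ?_ fun a hpa _ => ?_
  · rw [mul_xMat_apply hp]
    refine memT_add (memT_mono (by omega) (hvlam i j hij)) ?_
    simpa [hi] using memT_mul (hvO i ⟨p, hp⟩) (memT_xRow j)
  · refine memT_mono (le_of_eq ?_)
      (memT_mul (memT_tz _) (memT_mul_xMat_apply_of_lt hp hlam h2a hvO hvlam hpa j))
    rw [hi]
    ring

end Bounds

theorem stmt6_general (n : ℕ) (N : ℕ)
    (p q : ℕ) (hpq : p ≤ q) (hq : q < n)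
    (lam mu : ℕ → ℤ)
    (hlam : ∀ i j : ℕ, i ≤ j → j ≤ n → lam j ≤ lam i)
    (hmu : ∀ i j : ℕ, i ≤ j → j ≤ n → mu j ≤ mu i)
    (nus : ℕ → ℤ) (hnus : ∀ i, nus i = lam i + mu i - N * bcov p q i)
    (h2a : (N : ℤ) ≤ lam p - lam (p + 1))
    (h2d : (N : ℤ) ≤ mu q - mu (q + 1))
    (v : Matrix (Fin (n+1)) (Fin (n+1)) KK)
    (hvO : ∀ i j : Fin (n+1), memT 0 (v i j))
    (hvlam : ∀ i j : Fin (n+1), i < j → memT (lam i - lam j) (v i j))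
    (hvB : ∀ i j : Fin (n+1), i < j → caseB p q i j → memT (nus i - nus j) (v i j)) :
    ∀ i j : Fin (n+1), i < j →
      ((caseC p q i j ∨ caseD p q i j) →
        memT (lam i - lam j) (((xMat n N p q lam)⁻¹ * v * xMat n N p q lam) i j)) ∧
      (caseE p q i j →
        memT (lam i - lam j - N) (((xMat n N p q lam)⁻¹ * v * xMat n N p q lam) i j)) := by
  have hp : p < n + 1 := by omega
  intro i j hij
  refine ⟨fun hCD => ?_, memT_conj_xMat_apply_caseE hp hlam h2a hvO hvlam hij⟩
  rcases hCD with hC | ⟨-, -, hi⟩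
  · exact memT_conj_xMat_apply_caseC hp hpq hmu hnus h2d hvlam hvB hij hC
  · exact memT_conj_xMat_apply_of_ne hp hpq hlam hmu hnus h2a hvO hvlam hvB hi hij

/-- Lemma 4.4: if `v ∈ V` and moreover `v_{i,j} ∈ t^{ν*_i−ν*_j}𝒪` for every
case-(B) pair, then `u = x⁻¹ v x` satisfies `u_{i,j} ∈ t^{λ_i−λ_j}𝒪` in cases (C) and (D),
and `u_{p,j} ∈ t^{λ_p−λ_j−N}𝒪` in case (E).
(Indices are `0`-based: rows and columns run through `0,…,n`, and `0 ≤ p ≤ q ≤ n−1`.) -/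
theorem stmt6 (n : ℕ) (hn : 1 ≤ n) (N : ℕ) (hN : 1 ≤ N)
    (p q : ℕ) (hpq : p ≤ q) (hq : q < n)
    (lam mu : ℕ → ℤ)
    (hlam : ∀ i j : ℕ, i ≤ j → j ≤ n → lam j ≤ lam i)
    (hmu : ∀ i j : ℕ, i ≤ j → j ≤ n → mu j ≤ mu i)
    (nus : ℕ → ℤ) (hnus : ∀ i, nus i = lam i + mu i - N * bcov p q i)
    (hnusdom : ∀ i j : ℕ, i ≤ j → j ≤ n → nus j ≤ nus i)
    (h2a : (N : ℤ) ≤ lam p - lam (p + 1)) (h2b : (N : ℤ) ≤ lam q - lam (q + 1))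
    (h2c : (N : ℤ) ≤ mu p - mu (p + 1)) (h2d : (N : ℤ) ≤ mu q - mu (q + 1))
    (v : Matrix (Fin (n+1)) (Fin (n+1)) KK)
    (hvtr : Matrix.trace v = 0)
    (hvO : ∀ i j : Fin (n+1), memT 0 (v i j))
    (hvlam : ∀ i j : Fin (n+1), i < j → memT (lam i - lam j) (v i j))
    (hvB : ∀ i j : Fin (n+1), i < j → caseB p q i j → memT (nus i - nus j) (v i j)) :
    ∀ i j : Fin (n+1), i < j →
      ((caseC p q i j ∨ caseD p q i j) →
        memT (lam i - lam j) (((xMat n N p q lam)⁻¹ * v * xMat n N p q lam) i j)) ∧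
      (caseE p q i j →
        memT (lam i - lam j - N) (((xMat n N p q lam)⁻¹ * v * xMat n N p q lam) i j)) :=
  stmt6_general n N p q hpq hq lam mu hlam hmu nus hnus h2a h2d v hvO hvlam hvB
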